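/- For all a ≥ 0, the Catalan number C_{2^a - 1} is odd. -/

import Mathlib

/-!
Splitting Segner's recurrence `C_{2n+1} = ∑_{i+j=2n} C_i C_j` along the symmetry `i ↔ j`
leaves `C_n²` plus an even number, so `C_{2n+1}` and `C_n` have the same parity. Since
`2^(a+1) - 1 = 2 (2^a - 1) + 1`, induction on `a` starting from `C_0 = 1` gives the claim.
-/

open Finset

theorem Finset.Nat.sum_antidiagonal_two_mul_of_symm {M : Type*} [AddCommMonoid M]
    (f : ℕ → ℕ → M) (hf : ∀ i j, f i j = f j i) (n : ℕ) :
    ∑ ij ∈ antidiagonal (2 * n), f ij.1 ij.2 = f n n + 2 • ∑ i ∈ range n, f i (2 * n - i) := by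
  have upper_half : ∑ k ∈ range n, f (n + (k + 1)) (2 * n - (n + (k + 1)))
      = ∑ i ∈ range n, f i (2 * n - i) := by
    rw [← sum_range_reflect (fun i => f i (2 * n - i))]
    refine sum_congr rfl fun k hk => ?_
    have := mem_range.mp hk
    rw [hf, show 2 * n - (n + (k + 1)) = n - 1 - k by omega,
      show 2 * n - (n - 1 - k) = n + (k + 1) by omega]
  rw [Finset.Nat.sum_antidiagonal_eq_sum_range_succ_mk, show (2 * n).succ = n + (n + 1) by omega,
    sum_range_add, sum_range_succ']
  simp only [add_zero, show 2 * n - n = n by omega, upper_half]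
  abel

theorem catalan_two_mul_add_one (n : ℕ) :
    catalan (2 * n + 1) = catalan n ^ 2 + 2 * ∑ i ∈ range n, catalan i * catalan (2 * n - i) := by
  rw [catalan_succ',
    Finset.Nat.sum_antidiagonal_two_mul_of_symm (fun i j => catalan i * catalan j)
      (fun i j => mul_comm _ _),
    sq, smul_eq_mul]

theorem odd_catalan_two_mul_add_one_iff {n : ℕ} : Odd (catalan (2 * n + 1)) ↔ Odd (catalan n) := by
  rw [catalan_two_mul_add_one]
  simp only [Nat.odd_add, even_two_mul, iff_true, Nat.odd_pow_iff two_ne_zero]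

/-- For all `a ≥ 0`, the Catalan number `C_{2^a - 1}` is odd. -/
theorem catalan_two_pow_sub_one_odd (a : ℕ) : Odd (catalan (2 ^ a - 1)) := by
  induction a with
  | zero => simp
  | succ a ih =>
    have h : 2 ^ (a + 1) - 1 = 2 * (2 ^ a - 1) + 1 := by
      have := Nat.one_le_two_pow (n := a)
      rw [pow_succ]
      omega
    rwa [h, odd_catalan_two_mul_add_one_iff]
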